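/- Let δ ⊆ ℕ^n be a finite standard set, and let α + λ = α' + λ' ∈ δ^{(2)} with α ≠ α' ∈ δ^{(1)} and λ ≠ λ' distinct standard basis vectors, where δ^{(1)} = ℬ(δ) and δ^{(2)} = ℬ(δ ∪ δ^{(1)}). Suppose α + λ is a corner of δ ∪ δ^{(1)} and lies in a coordinate plane ℕe_i ⊕ ℕe_j. If ε := α − λ' = α' − λ lies in ℕ^n but not in δ^{(1)}, then ε ∈ δ and ε is an edge point of δ (ε ∈ ℕλ ⊕ ℕλ', ε + λ ∉ δ, ε + λ' ∉ δ). -/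

import Mathlib

/-!
Both δ and δ ∪ δ⁽¹⁾ are standard, so the corner α + e_i of δ ∪ δ⁽¹⁾ has its predecessor
ε + e_i in δ ∪ δ⁽¹⁾, hence so is ε, and ε ∉ δ⁽¹⁾ forces ε ∈ δ. Neither ε + e_i nor ε + e_j = α can
lie in δ, since otherwise their successor α + e_i would lie in δ ∪ δ⁽¹⁾.
-/

/-- A standard set in ℕ^n: its complement is closed under addition of elements of ℕ^n. -/
def StdSet {n : ℕ} (δ : Set (Fin n → ℕ)) : Prop :=
  ∀ α ∉ δ, ∀ γ : Fin n → ℕ, α + γ ∉ δ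

/-- A corner of δ: an element outside δ all of whose predecessors (when they exist in ℕ^n)
lie in δ. -/
def StdCorner {n : ℕ} (δ : Set (Fin n → ℕ)) (α : Fin n → ℕ) : Prop :=
  α ∉ δ ∧ ∀ (i : Fin n) (β : Fin n → ℕ), β + Pi.single i 1 = α → β ∈ δ

/-- The border of δ: elements outside δ of the form β + e_i with β ∈ δ. -/
def StdBorder {n : ℕ} (δ : Set (Fin n → ℕ)) : Set (Fin n → ℕ) :=
  {α | α ∉ δ ∧ ∃ (i : Fin n), ∃ β ∈ δ, β + Pi.single i 1 = α}

section StdSet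

variable {n : ℕ} {δ : Set (Fin n → ℕ)}

theorem StdSet.mem_of_add_mem (h : StdSet δ) {β γ : Fin n → ℕ} (hβγ : β + γ ∈ δ) : β ∈ δ :=
  by_contra fun hβ => h β hβ γ hβγ

theorem exists_add_single_eq_of_pos {β : Fin n → ℕ} {i : Fin n} (hβ : 0 < β i) :
    ∃ γ : Fin n → ℕ, γ + Pi.single i 1 = β :=
  ⟨β - Pi.single i 1, tsub_add_cancel_of_le fun m => by
    rcases eq_or_ne m i with rfl | hm
    · rw [Pi.single_eq_same]
      exact hβ
    · simp [hm]⟩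

theorem add_single_mem_union_stdBorder {β : Fin n → ℕ} (hβ : β ∈ δ) (k : Fin n) :
    β + Pi.single k 1 ∈ δ ∪ StdBorder δ := by
  by_cases hk : β + Pi.single k 1 ∈ δ
  · exact Or.inl hk
  · exact Or.inr ⟨hk, k, β, hβ, rfl⟩

/-- `δ ∪ StdBorder δ` is again standard, one step at a time. -/
theorem StdSet.mem_union_stdBorder_of_add_single (h : StdSet δ) {ε : Fin n → ℕ} {i : Fin n}
    (hε : ε + Pi.single i 1 ∈ δ ∪ StdBorder δ) : ε ∈ δ ∪ StdBorder δ := by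
  rcases hε with hε | ⟨-, k, β, hβ, hβε⟩
  · exact Or.inl (h.mem_of_add_mem hε)
  rcases eq_or_ne k i with rfl | hki
  · exact Or.inl (add_right_cancel hβε ▸ hβ)
  -- `β + e_k = ε + e_i` with `k ≠ i`, so `β = γ + e_i` and `ε = γ + e_k`.
  have hβi : 0 < β i := by
    have := congrFun hβε i
    simp only [Pi.add_apply, Pi.single_eq_same, Pi.single_eq_of_ne' hki] at this
    omega
  obtain ⟨γ, rfl⟩ := exists_add_single_eq_of_pos hβi
  have hγε : γ + Pi.single k 1 = ε := by
    rw [add_right_comm] at hβε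
    exact add_right_cancel hβε
  exact hγε ▸ add_single_mem_union_stdBorder (h.mem_of_add_mem hβ) k

end StdSet

theorem stmt14_general {n : ℕ} (δ : Set (Fin n → ℕ)) (h : StdSet δ)
    (i j : Fin n) (α ε : Fin n → ℕ)
    (hcorner : StdCorner (δ ∪ StdBorder δ) (α + Pi.single i 1))
    (hplane : ∀ k, k ≠ i → k ≠ j → ((α + Pi.single i 1 : Fin n → ℕ)) k = 0)
    (hε : ε + Pi.single j 1 = α)
    (hεnot : ε ∉ StdBorder δ) :
    ε ∈ δ ∧ (∀ k, k ≠ i → k ≠ j → ε k = 0) ∧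
      ε + Pi.single i 1 ∉ δ ∧ ε + Pi.single j 1 ∉ δ := by
  have hpred : ε + Pi.single i 1 + Pi.single j 1 = α + Pi.single i 1 := by
    rw [add_right_comm, hε]
  have hεδ : ε ∈ δ :=
    (h.mem_union_stdBorder_of_add_single (hcorner.2 j _ hpred)).resolve_right hεnot
  refine ⟨hεδ, fun k hki hkj => ?_, fun hεi => ?_, fun hα => ?_⟩
  · simpa [← hε, Pi.single_eq_of_ne hki, Pi.single_eq_of_ne hkj] using hplane k hki hkj
  · exact hcorner.1 (hpred ▸ add_single_mem_union_stdBorder hεi j)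
  · exact hcorner.1 (hε ▸ add_single_mem_union_stdBorder hα i)

theorem stmt14 {n : ℕ} (δ : Set (Fin n → ℕ)) (h : StdSet δ) (hfin : δ.Finite)
    (i j : Fin n) (hij : i ≠ j) (α α' ε : Fin n → ℕ)
    (hα : α ∈ StdBorder δ) (hα' : α' ∈ StdBorder δ) (hne : α ≠ α')
    (hsum : α + Pi.single i 1 = α' + Pi.single j 1)
    (hδ2 : α + Pi.single i 1 ∈ StdBorder (δ ∪ StdBorder δ))
    (hcorner : StdCorner (δ ∪ StdBorder δ) (α + Pi.single i 1))
    (hplane : ∀ k, k ≠ i → k ≠ j → ((α + Pi.single i 1 : Fin n → ℕ)) k = 0)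
    (hε : ε + Pi.single j 1 = α)
    (hεnot : ε ∉ StdBorder δ) :
    ε ∈ δ ∧ (∀ k, k ≠ i → k ≠ j → ε k = 0) ∧
      ε + Pi.single i 1 ∉ δ ∧ ε + Pi.single j 1 ∉ δ :=
  stmt14_general δ h i j α ε hcorner hplane hε hεnot
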